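/- arXiv:2002.10755 — 3 statements merged into one kernel-verified Lean document; each statement's English description precedes it below -/
import Mathlib

section
/- For every finite family L of L-shapes in the plane there exists a finite family S of nondegenerate closed straight-line segments in ℝ² and a bijection φ : L → S such that for all distinct ℓ₁, ℓ₂ ∈ L, the sets ℓ₁ and ℓ₂ intersect if and only if the segments φ(ℓ₁) and φ(ℓ₂) intersect; that is, every intersection graph of L-shapes is an intersection graph of segments. -/
open Set

/-- An L-shape, given by its corner `(x, y)`, right endpoint `(r, y)`,
and top endpoint `(x, t)`, with `x < r` and `y < t`. -/
structure LS where
  x : ℝ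
  y : ℝ
  r : ℝ
  t : ℝ
  hxr : x < r
  hyt : y < t

/-- The horizontal segment of an L-shape. -/
def LS.hSeg (ℓ : LS) : Set (ℝ × ℝ) := Icc ℓ.x ℓ.r ×ˢ ({ℓ.y} : Set ℝ)

/-- The vertical segment of an L-shape. -/
def LS.vSeg (ℓ : LS) : Set (ℝ × ℝ) := ({ℓ.x} : Set ℝ) ×ˢ Icc ℓ.y ℓ.t

/-- The L-shape as a subset of the plane. -/
def LS.set (ℓ : LS) : Set (ℝ × ℝ) := ℓ.hSeg ∪ ℓ.vSeg

/-- The intersection graph of a finite family of sets in the plane (each element `a` of the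
index family represents the set `toSet a`): two vertices are adjacent exactly when they
represent distinct sets that intersect. -/
def iGraph {α : Type} (F : Finset α) (toSet : α → Set (ℝ × ℝ)) :
    SimpleGraph {a // a ∈ F} where
  Adj a b := toSet a.1 ≠ toSet b.1 ∧ (toSet a.1 ∩ toSet b.1).Nonempty
  symm := by
    constructor
    intro a b h
    exact ⟨h.1.symm, by rw [Set.inter_comm]; exact h.2⟩
  loopless := by constructor; intro a h; exact h.1 rfl

/-- A subset of the plane is an L-shape. -/
def IsLShape (A : Set (ℝ × ℝ)) : Prop := ∃ ℓ : LS, A = ℓ.set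

/-- A subset of the plane is a nondegenerate closed straight-line segment:
the convex hull of two distinct points. -/
def IsSegment (A : Set (ℝ × ℝ)) : Prop := ∃ p q : ℝ × ℝ, p ≠ q ∧ A = segment ℝ p q

namespace Stmt9Aux

open scoped Classical

variable {ι : Type} [Fintype ι]

/-- strict lex order on corners for the x-axis: smaller x first; ties: larger y first;
then smaller ord first. -/
def ordX (ℓ : ι → LS) (ord : ι → ℕ) (i j : ι) : Prop :=
  (ℓ i).x < (ℓ j).x ∨ ((ℓ i).x = (ℓ j).x ∧
    ((ℓ j).y < (ℓ i).y ∨ ((ℓ i).y = (ℓ j).y ∧ ord i < ord j)))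

/-- strict lex order on corners for the y-axis: smaller y first; ties: larger x first;
then larger ord first. -/
def ordY (ℓ : ι → LS) (ord : ι → ℕ) (i j : ι) : Prop :=
  (ℓ i).y < (ℓ j).y ∨ ((ℓ i).y = (ℓ j).y ∧
    ((ℓ j).x < (ℓ i).x ∨ ((ℓ i).x = (ℓ j).x ∧ ord j < ord i)))

variable (ℓ : ι → LS) (ord : ι → ℕ)

lemma ordX_irrefl (i : ι) : ¬ ordX ℓ ord i i := by
  simp [ordX]

lemma ordY_irrefl (i : ι) : ¬ ordY ℓ ord i i := by
  simp [ordY]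

lemma ordX_trans {i j k : ι} (h1 : ordX ℓ ord i j) (h2 : ordX ℓ ord j k) :
    ordX ℓ ord i k := by
  unfold ordX at *
  rcases h1 with h1 | ⟨e1, h1⟩ <;> rcases h2 with h2 | ⟨e2, h2⟩
  · exact Or.inl (lt_trans h1 h2)
  · exact Or.inl (e2 ▸ h1)
  · exact Or.inl (e1 ▸ h2)
  · refine Or.inr ⟨e1.trans e2, ?_⟩
    rcases h1 with h1 | ⟨f1, h1⟩ <;> rcases h2 with h2 | ⟨f2, h2⟩
    · exact Or.inl (lt_trans h2 h1)
    · exact Or.inl (f2 ▸ h1)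
    · exact Or.inl (f1 ▸ h2)
    · exact Or.inr ⟨f1.trans f2, lt_trans h1 h2⟩

lemma ordY_trans {i j k : ι} (h1 : ordY ℓ ord i j) (h2 : ordY ℓ ord j k) :
    ordY ℓ ord i k := by
  unfold ordY at *
  rcases h1 with h1 | ⟨e1, h1⟩ <;> rcases h2 with h2 | ⟨e2, h2⟩
  · exact Or.inl (lt_trans h1 h2)
  · exact Or.inl (e2 ▸ h1)
  · exact Or.inl (e1 ▸ h2)
  · refine Or.inr ⟨e1.trans e2, ?_⟩
    rcases h1 with h1 | ⟨f1, h1⟩ <;> rcases h2 with h2 | ⟨f2, h2⟩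
    · exact Or.inl (lt_trans h2 h1)
    · exact Or.inl (f2 ▸ h1)
    · exact Or.inl (f1 ▸ h2)
    · exact Or.inr ⟨f1.trans f2, lt_trans h2 h1⟩

lemma ordX_asymm {i j : ι} (h : ordX ℓ ord i j) : ¬ ordX ℓ ord j i :=
  fun h' => ordX_irrefl ℓ ord i (ordX_trans ℓ ord h h')

lemma ordY_asymm {i j : ι} (h : ordY ℓ ord i j) : ¬ ordY ℓ ord j i :=
  fun h' => ordY_irrefl ℓ ord i (ordY_trans ℓ ord h h')

lemma ordX_total (hord : Function.Injective ord) {i j : ι} (hij : i ≠ j) :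
    ordX ℓ ord i j ∨ ordX ℓ ord j i := by
  have : ord i ≠ ord j := fun h => hij (hord h)
  unfold ordX
  rcases lt_trichotomy (ℓ i).x (ℓ j).x with h | h | h
  · exact Or.inl (Or.inl h)
  · rcases lt_trichotomy (ℓ i).y (ℓ j).y with g | g | g
    · exact Or.inr (Or.inr ⟨h.symm, Or.inl g⟩)
    · rcases lt_or_gt_of_ne this with o | o
      · exact Or.inl (Or.inr ⟨h, Or.inr ⟨g, o⟩⟩)
      · exact Or.inr (Or.inr ⟨h.symm, Or.inr ⟨g.symm, o⟩⟩)
    · exact Or.inl (Or.inr ⟨h, Or.inl g⟩)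
  · exact Or.inr (Or.inl h)

lemma ordY_total (hord : Function.Injective ord) {i j : ι} (hij : i ≠ j) :
    ordY ℓ ord i j ∨ ordY ℓ ord j i := by
  have : ord i ≠ ord j := fun h => hij (hord h)
  unfold ordY
  rcases lt_trichotomy (ℓ i).y (ℓ j).y with h | h | h
  · exact Or.inl (Or.inl h)
  · rcases lt_trichotomy (ℓ i).x (ℓ j).x with g | g | g
    · exact Or.inr (Or.inr ⟨h.symm, Or.inl g⟩)
    · rcases lt_or_gt_of_ne this with o | o
      · exact Or.inr (Or.inr ⟨h.symm, Or.inr ⟨g.symm, o⟩⟩)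
      · exact Or.inl (Or.inr ⟨h, Or.inr ⟨g, o⟩⟩)
    · exact Or.inl (Or.inr ⟨h, Or.inl g⟩)
  · exact Or.inr (Or.inl h)

end Stmt9Aux

namespace Stmt9Aux

set_option linter.unusedSectionVars false

variable {ι : Type} [Fintype ι] (ℓ : ι → LS) (ord : ι → ℕ)

open scoped Classical

noncomputable def NXc (i : ι) : ℕ := (Finset.univ.filter (fun k => ordX ℓ ord k i)).card
noncomputable def NYc (i : ι) : ℕ := (Finset.univ.filter (fun k => ordY ℓ ord k i)).card
noncomputable def MXc (i : ι) : ℕ := (Finset.univ.filter (fun k => (ℓ k).x ≤ (ℓ i).r)).card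
noncomputable def MYc (i : ι) : ℕ := (Finset.univ.filter (fun k => (ℓ k).y ≤ (ℓ i).t)).card

noncomputable def Xv (i : ι) : ℝ := 16 ^ (NXc ℓ ord i)
noncomputable def Yv (i : ι) : ℝ := 16 ^ (NYc ℓ ord i)
noncomputable def Rv (i : ι) : ℝ := 16 ^ (MXc ℓ i) / 4
noncomputable def Tv (i : ι) : ℝ := 16 ^ (MYc ℓ i) / 4

lemma Xv_ge_one (i : ι) : 1 ≤ Xv ℓ ord i := one_le_pow₀ (by norm_num)
lemma Yv_ge_one (i : ι) : 1 ≤ Yv ℓ ord i := one_le_pow₀ (by norm_num)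
lemma Xv_pos (i : ι) : 0 < Xv ℓ ord i := lt_of_lt_of_le one_pos (Xv_ge_one ℓ ord i)
lemma Yv_pos (i : ι) : 0 < Yv ℓ ord i := lt_of_lt_of_le one_pos (Yv_ge_one ℓ ord i)

lemma pow16_le {a b : ℕ} (h : a ≤ b) : (16:ℝ) ^ a ≤ 16 ^ b :=
  pow_le_pow_right₀ (by norm_num) h

lemma NXc_lt {i j : ι} (h : ordX ℓ ord i j) : NXc ℓ ord i < NXc ℓ ord j := by
  apply Finset.card_lt_card
  constructor
  · intro k hk
    simp only [Finset.mem_filter, Finset.mem_univ, true_and] at *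
    exact ordX_trans ℓ ord hk h
  · intro hsub
    have hi : i ∈ Finset.univ.filter (fun k => ordX ℓ ord k j) := by
      simp only [Finset.mem_filter, Finset.mem_univ, true_and]; exact h
    have := hsub hi
    simp only [Finset.mem_filter, Finset.mem_univ, true_and] at this
    exact ordX_irrefl ℓ ord i this

lemma NYc_lt {i j : ι} (h : ordY ℓ ord i j) : NYc ℓ ord i < NYc ℓ ord j := by
  apply Finset.card_lt_card
  constructor
  · intro k hk
    simp only [Finset.mem_filter, Finset.mem_univ, true_and] at *
    exact ordY_trans ℓ ord hk h
  · intro hsub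
    have hi : i ∈ Finset.univ.filter (fun k => ordY ℓ ord k j) := by
      simp only [Finset.mem_filter, Finset.mem_univ, true_and]; exact h
    have := hsub hi
    simp only [Finset.mem_filter, Finset.mem_univ, true_and] at this
    exact ordY_irrefl ℓ ord i this

lemma Xv_scale {i j : ι} (h : ordX ℓ ord i j) : 16 * Xv ℓ ord i ≤ Xv ℓ ord j := by
  have := NXc_lt ℓ ord h
  have : (16:ℝ) ^ (NXc ℓ ord i + 1) ≤ 16 ^ (NXc ℓ ord j) := pow16_le this
  calc 16 * Xv ℓ ord i = 16 ^ (NXc ℓ ord i + 1) := by rw [Xv, pow_succ]; ring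
    _ ≤ _ := this

lemma Yv_scale {i j : ι} (h : ordY ℓ ord i j) : 16 * Yv ℓ ord i ≤ Yv ℓ ord j := by
  have := NYc_lt ℓ ord h
  have : (16:ℝ) ^ (NYc ℓ ord i + 1) ≤ 16 ^ (NYc ℓ ord j) := pow16_le this
  calc 16 * Yv ℓ ord i = 16 ^ (NYc ℓ ord i + 1) := by rw [Yv, pow_succ]; ring
    _ ≤ _ := this

/-- If `x_j ≤ r_i` then `4 X_j ≤ R_i`. -/
lemma R_big {i j : ι} (h : (ℓ j).x ≤ (ℓ i).r) : 4 * Xv ℓ ord j ≤ Rv ℓ i := by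
  have hcard : NXc ℓ ord j + 1 ≤ MXc ℓ i := by
    have hsub : Finset.univ.filter (fun k => ordX ℓ ord k j) ⊆
        (Finset.univ.filter (fun k => (ℓ k).x ≤ (ℓ i).r)).erase j := by
      intro k hk
      simp only [Finset.mem_filter, Finset.mem_univ, true_and] at hk
      have hkx : (ℓ k).x ≤ (ℓ j).x := by
        rcases hk with h' | ⟨h', _⟩
        · exact le_of_lt h'
        · exact le_of_eq h'
      have hkj : k ≠ j := by rintro rfl; exact ordX_irrefl ℓ ord k hk
      refine Finset.mem_erase.mpr ⟨hkj, ?_⟩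
      simp only [Finset.mem_filter, Finset.mem_univ, true_and]
      exact le_trans hkx h
    have hje : j ∈ Finset.univ.filter (fun k => (ℓ k).x ≤ (ℓ i).r) := by
      simp only [Finset.mem_filter, Finset.mem_univ, true_and]; exact h
    calc NXc ℓ ord j + 1 ≤ ((Finset.univ.filter (fun k => (ℓ k).x ≤ (ℓ i).r)).erase j).card + 1 :=
          by exact Nat.add_le_add_right (Finset.card_le_card hsub) 1
      _ = MXc ℓ i := by
          rw [Finset.card_erase_of_mem hje]
          have : 1 ≤ MXc ℓ i := Finset.card_pos.mpr ⟨j, hje⟩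
          unfold MXc at *
          omega
  have : (16:ℝ) ^ (NXc ℓ ord j + 1) ≤ 16 ^ (MXc ℓ i) := pow16_le hcard
  have h16 : 16 * Xv ℓ ord j ≤ 16 ^ (MXc ℓ i) := by
    calc 16 * Xv ℓ ord j = 16 ^ (NXc ℓ ord j + 1) := by rw [Xv, pow_succ]; ring
      _ ≤ _ := this
  rw [Rv]
  linarith

/-- If `x_j > r_i` then `X_j ≥ 4 R_i`. -/
lemma R_small {i j : ι} (h : (ℓ i).r < (ℓ j).x) : 4 * Rv ℓ i ≤ Xv ℓ ord j := by
  have hcard : MXc ℓ i ≤ NXc ℓ ord j := by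
    apply Finset.card_le_card
    intro k hk
    simp only [Finset.mem_filter, Finset.mem_univ, true_and] at *
    exact Or.inl (lt_of_le_of_lt hk h)
  have := pow16_le (a := MXc ℓ i) (b := NXc ℓ ord j) hcard
  rw [Rv, Xv]
  linarith

lemma T_big {i j : ι} (h : (ℓ j).y ≤ (ℓ i).t) : 4 * Yv ℓ ord j ≤ Tv ℓ i := by
  have hcard : NYc ℓ ord j + 1 ≤ MYc ℓ i := by
    have hsub : Finset.univ.filter (fun k => ordY ℓ ord k j) ⊆
        (Finset.univ.filter (fun k => (ℓ k).y ≤ (ℓ i).t)).erase j := by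
      intro k hk
      simp only [Finset.mem_filter, Finset.mem_univ, true_and] at hk
      have hky : (ℓ k).y ≤ (ℓ j).y := by
        rcases hk with h' | ⟨h', _⟩
        · exact le_of_lt h'
        · exact le_of_eq h'
      have hkj : k ≠ j := by rintro rfl; exact ordY_irrefl ℓ ord k hk
      refine Finset.mem_erase.mpr ⟨hkj, ?_⟩
      simp only [Finset.mem_filter, Finset.mem_univ, true_and]
      exact le_trans hky h
    have hje : j ∈ Finset.univ.filter (fun k => (ℓ k).y ≤ (ℓ i).t) := by
      simp only [Finset.mem_filter, Finset.mem_univ, true_and]; exact h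
    calc NYc ℓ ord j + 1 ≤ ((Finset.univ.filter (fun k => (ℓ k).y ≤ (ℓ i).t)).erase j).card + 1 :=
          by exact Nat.add_le_add_right (Finset.card_le_card hsub) 1
      _ = MYc ℓ i := by
          rw [Finset.card_erase_of_mem hje]
          have : 1 ≤ MYc ℓ i := Finset.card_pos.mpr ⟨j, hje⟩
          unfold MYc at *
          omega
  have : (16:ℝ) ^ (NYc ℓ ord j + 1) ≤ 16 ^ (MYc ℓ i) := pow16_le hcard
  have h16 : 16 * Yv ℓ ord j ≤ 16 ^ (MYc ℓ i) := by
    calc 16 * Yv ℓ ord j = 16 ^ (NYc ℓ ord j + 1) := by rw [Yv, pow_succ]; ring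
      _ ≤ _ := this
  rw [Tv]
  linarith

lemma T_small {i j : ι} (h : (ℓ i).t < (ℓ j).y) : 4 * Tv ℓ i ≤ Yv ℓ ord j := by
  have hcard : MYc ℓ i ≤ NYc ℓ ord j := by
    apply Finset.card_le_card
    intro k hk
    simp only [Finset.mem_filter, Finset.mem_univ, true_and] at *
    exact Or.inl (lt_of_le_of_lt hk h)
  have := pow16_le (a := MYc ℓ i) (b := NYc ℓ ord j) hcard
  rw [Tv, Yv]
  linarith

lemma R_self (i : ι) : 4 * Xv ℓ ord i ≤ Rv ℓ i := R_big ℓ ord (le_of_lt (ℓ i).hxr)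
lemma T_self (i : ι) : 4 * Yv ℓ ord i ≤ Tv ℓ i := T_big ℓ ord (le_of_lt (ℓ i).hyt)

lemma Rv_pos (i : ι) : 0 < Rv ℓ i :=
  lt_of_lt_of_le (by linarith [Xv_pos ℓ (fun _ => 0) i]) (R_self ℓ (fun _ => 0) i)
lemma Tv_pos (i : ι) : 0 < Tv ℓ i :=
  lt_of_lt_of_le (by linarith [Yv_pos ℓ (fun _ => 0) i]) (T_self ℓ (fun _ => 0) i)

/-- `x_j ≤ r_i ↔ 4 X_j ≤ R_i`. -/
lemma R_iff {i j : ι} : (ℓ j).x ≤ (ℓ i).r ↔ 4 * Xv ℓ ord j ≤ Rv ℓ i := by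
  constructor
  · exact R_big ℓ ord
  · intro h
    by_contra hc
    push_neg at hc
    have := R_small ℓ ord (i := i) (j := j) hc
    have := Xv_ge_one ℓ ord j
    linarith

lemma T_iff {i j : ι} : (ℓ j).y ≤ (ℓ i).t ↔ 4 * Yv ℓ ord j ≤ Tv ℓ i := by
  constructor
  · exact T_big ℓ ord
  · intro h
    by_contra hc
    push_neg at hc
    have := T_small ℓ ord (i := i) (j := j) hc
    have := Yv_ge_one ℓ ord j
    linarith

end Stmt9Aux

namespace Stmt9Aux

set_option linter.unusedSectionVars false

variable {ι : Type} [Fintype ι] (ℓ : ι → LS) (ord : ι → ℕ)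

open scoped Classical

/-- the affine function whose graph (over the height coordinate) carries segment `i`. -/
noncomputable def fl (i : ι) (v : ℝ) : ℝ := (1 - v) * Yv ℓ ord i + v * Xv ℓ ord i

noncomputable def βv (i : ι) : ℝ := 2 * Yv ℓ ord i / (2 * Yv ℓ ord i + Rv ℓ i)
noncomputable def τv (i : ι) : ℝ := Tv ℓ i / (Tv ℓ i + 2 * Xv ℓ ord i)

lemma βv_pos (i : ι) : 0 < βv ℓ ord i := by
  have := Yv_pos ℓ ord i; have := Rv_pos ℓ i
  exact div_pos (by linarith) (by linarith)

lemma τv_lt_one (i : ι) : τv ℓ ord i < 1 := by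
  have := Xv_pos ℓ ord i; have := Tv_pos ℓ i
  rw [τv, div_lt_one (by linarith)]; linarith

lemma βv_lt_τv (i : ι) : βv ℓ ord i < τv ℓ ord i := by
  have hY := Yv_pos ℓ ord i; have hR := Rv_pos ℓ i
  have hX := Xv_pos ℓ ord i; have hT := Tv_pos ℓ i
  have hRs := R_self ℓ ord i; have hTs := T_self ℓ ord i
  rw [βv, τv, div_lt_div_iff₀ (by linarith) (by linarith)]
  nlinarith [mul_pos hX hY]

lemma βv_lt_one (i : ι) : βv ℓ ord i < 1 :=
  lt_trans (βv_lt_τv ℓ ord i) (τv_lt_one ℓ ord i)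

lemma τv_pos (i : ι) : 0 < τv ℓ ord i := lt_trans (βv_pos ℓ ord i) (βv_lt_τv ℓ ord i)

/-- the segment representing `i`. -/
noncomputable def sg (i : ι) : Set (ℝ × ℝ) :=
  segment ℝ (fl ℓ ord i (βv ℓ ord i), βv ℓ ord i) (fl ℓ ord i (τv ℓ ord i), τv ℓ ord i)

lemma fl_affine (i : ι) (θ u v : ℝ) :
    fl ℓ ord i ((1 - θ) * u + θ * v) = (1 - θ) * fl ℓ ord i u + θ * fl ℓ ord i v := by
  unfold fl; ring

lemma mem_sg (i : ι) (p : ℝ × ℝ) :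
    p ∈ sg ℓ ord i ↔ βv ℓ ord i ≤ p.2 ∧ p.2 ≤ τv ℓ ord i ∧ p.1 = fl ℓ ord i p.2 := by
  set β := βv ℓ ord i with hβ
  set τ := τv ℓ ord i with hτ
  have hβτ : β < τ := βv_lt_τv ℓ ord i
  rw [sg, segment_eq_image]
  constructor
  · rintro ⟨θ, hθ, hp⟩
    simp only [Set.mem_Icc] at hθ
    have h2 : p.2 = (1 - θ) * β + θ * τ := by
      rw [← hp]; simp [Prod.smul_def, smul_eq_mul]; rfl
    have h1 : p.1 = (1 - θ) * fl ℓ ord i β + θ * fl ℓ ord i τ := by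
      rw [← hp]; simp [Prod.smul_def, smul_eq_mul]; rfl
    refine ⟨by nlinarith, by nlinarith, ?_⟩
    rw [h1, h2, fl_affine]
  · rintro ⟨h1, h2, h3⟩
    refine ⟨(p.2 - β) / (τ - β), ?_, ?_⟩
    · simp only [Set.mem_Icc]
      constructor
      · apply div_nonneg <;> linarith
      · rw [div_le_one (by linarith)]; linarith
    · have hne : τ - β ≠ 0 := by linarith
      have h2' : (1 - (p.2 - β) / (τ - β)) * β + (p.2 - β) / (τ - β) * τ = p.2 := by
        field_simp
        ring
      have : (1 - (p.2 - β) / (τ - β)) * fl ℓ ord i β + (p.2 - β) / (τ - β) * fl ℓ ord i τ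
          = fl ℓ ord i p.2 := by
        rw [← fl_affine, h2']
      apply Prod.ext
      · simpa [Prod.smul_def, smul_eq_mul, ← hβ, ← hτ, this] using h3.symm
      · simpa [Prod.smul_def, smul_eq_mul] using h2'

lemma sg_inter_iff (i j : ι) :
    (sg ℓ ord i ∩ sg ℓ ord j).Nonempty ↔
      ∃ v : ℝ, (βv ℓ ord i ≤ v ∧ v ≤ τv ℓ ord i) ∧ (βv ℓ ord j ≤ v ∧ v ≤ τv ℓ ord j) ∧
        fl ℓ ord i v = fl ℓ ord j v := by
  constructor
  · rintro ⟨p, hpi, hpj⟩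
    rw [mem_sg] at hpi hpj
    exact ⟨p.2, ⟨hpi.1, hpi.2.1⟩, ⟨hpj.1, hpj.2.1⟩, by rw [← hpi.2.2, ← hpj.2.2]⟩
  · rintro ⟨v, hi, hj, hf⟩
    refine ⟨(fl ℓ ord i v, v), ?_, ?_⟩
    · rw [mem_sg]; exact ⟨hi.1, hi.2, rfl⟩
    · rw [mem_sg]; exact ⟨hj.1, hj.2, by simp [hf]⟩

end Stmt9Aux

namespace Stmt9Aux

set_option linter.unusedSectionVars false

set_option maxHeartbeats 2000000 in
/-- Core real-arithmetic lemma: crossing of the two truncated chords is equivalent to the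
two reach conditions, for an "inverted" pair (1 left-top, 2 right-bottom). -/
lemma cross_core (X1 Y1 R1 T1 X2 Y2 R2 T2 : ℝ)
    (hX1 : 1 ≤ X1) (hX2 : 1 ≤ X2) (hY1 : 1 ≤ Y1) (hY2 : 1 ≤ Y2)
    (hXX : 16 * X1 ≤ X2) (hYY : 16 * Y2 ≤ Y1)
    (hR1 : 4 * X1 ≤ R1) (hR2 : 4 * X2 ≤ R2) (hT1 : 4 * Y1 ≤ T1) (hT2 : 4 * Y2 ≤ T2)
    (hE1 : 4 * X2 ≤ R1 ∨ 4 * R1 ≤ X2) (hE2 : 4 * Y1 ≤ T2 ∨ 4 * T2 ≤ Y1) :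
    (∃ v : ℝ, (2 * Y1 / (2 * Y1 + R1) ≤ v ∧ v ≤ T1 / (T1 + 2 * X1)) ∧
      (2 * Y2 / (2 * Y2 + R2) ≤ v ∧ v ≤ T2 / (T2 + 2 * X2)) ∧
      (1 - v) * Y1 + v * X1 = (1 - v) * Y2 + v * X2) ↔ (4 * X2 ≤ R1 ∧ 4 * Y1 ≤ T2) := by
  have hR1p : (0:ℝ) < R1 := by linarith
  have hR2p : (0:ℝ) < R2 := by linarith
  have hT1p : (0:ℝ) < T1 := by linarith
  have hT2p : (0:ℝ) < T2 := by linarith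
  set DY := Y1 - Y2 with hDY
  set DX := X2 - X1 with hDX
  have hDYp : 0 < DY := by simp only [hDY]; linarith
  have hDXp : 0 < DX := by simp only [hDX]; linarith
  have hDYl : 16 * DY ≥ 15 * Y1 := by simp only [hDY]; linarith
  have hDXl : 16 * DX ≥ 15 * X2 := by simp only [hDX]; linarith
  have hDYu : DY ≤ Y1 := by simp only [hDY]; linarith
  have hDXu : DX ≤ X2 := by simp only [hDX]; linarith
  have hS : 0 < DY + DX := by linarith
  constructor
  · rintro ⟨v, ⟨hb1, ht1⟩, ⟨hb2, ht2⟩, heq⟩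
    have hv : DY = v * (DY + DX) := by simp only [hDY, hDX]; linarith [heq]
    constructor
    · rcases hE1 with h | h
      · exact h
      · exfalso
        have hb1' : 2 * Y1 ≤ v * (2 * Y1 + R1) := by
          rw [div_le_iff₀ (by linarith)] at hb1; linarith
        have key : 2 * Y1 * DX ≤ R1 * DY := by
          nlinarith [mul_le_mul_of_nonneg_right hb1' hS.le]
        nlinarith [mul_pos (show (0:ℝ) < Y1 by linarith) hR1p]
    · rcases hE2 with h | h
      · exact h
      · exfalso
        have ht2' : v * (T2 + 2 * X2) ≤ T2 := by
          rw [le_div_iff₀ (by linarith)] at ht2; linarith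
        have key : 2 * X2 * DY ≤ T2 * DX := by
          nlinarith [mul_le_mul_of_nonneg_right ht2' hS.le]
        nlinarith [mul_pos (show (0:ℝ) < X2 by linarith) hT2p]
  · rintro ⟨h1, h2⟩
    refine ⟨DY / (DY + DX), ⟨?_, ?_⟩, ⟨?_, ?_⟩, ?_⟩
    · rw [div_le_div_iff₀ (by linarith) hS]
      nlinarith [mul_le_mul_of_nonneg_left hDXu (show (0:ℝ) ≤ 2 * Y1 by linarith)]
    · rw [div_le_div_iff₀ hS (by linarith)]
      nlinarith [mul_le_mul_of_nonneg_left hDYu (show (0:ℝ) ≤ 2 * X1 by linarith)]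
    · rw [div_le_div_iff₀ (by linarith) hS]
      nlinarith [mul_le_mul_of_nonneg_left hDXu (show (0:ℝ) ≤ 2 * Y2 by linarith)]
    · rw [div_le_div_iff₀ hS (by linarith)]
      nlinarith [mul_le_mul_of_nonneg_left hDYu (show (0:ℝ) ≤ 2 * X2 by linarith)]
    · have : (1 - DY / (DY + DX)) = DX / (DY + DX) := by
        field_simp
        ring
      rw [this]
      field_simp
      simp only [hDY, hDX]
      ring

end Stmt9Aux

namespace Stmt9Aux

set_option linter.unusedSectionVars false

variable {ι : Type} [Fintype ι] (ℓ : ι → LS) (ord : ι → ℕ)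

open scoped Classical

/-- The combinatorial crossing condition. -/
def Cr (i j : ι) : Prop :=
  (ordX ℓ ord i j ∧ ordY ℓ ord j i ∧ (ℓ j).x ≤ (ℓ i).r ∧ (ℓ i).y ≤ (ℓ j).t) ∨
  (ordX ℓ ord j i ∧ ordY ℓ ord i j ∧ (ℓ i).x ≤ (ℓ j).r ∧ (ℓ j).y ≤ (ℓ i).t)

lemma Cr_comm (i j : ι) : Cr ℓ ord i j ↔ Cr ℓ ord j i := by unfold Cr; tauto

lemma sg_cross_orient {i j : ι} (hx : ordX ℓ ord i j) (hy : ordY ℓ ord j i) :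
    (sg ℓ ord i ∩ sg ℓ ord j).Nonempty ↔ ((ℓ j).x ≤ (ℓ i).r ∧ (ℓ i).y ≤ (ℓ j).t) := by
  rw [sg_inter_iff]
  have hE1 : 4 * Xv ℓ ord j ≤ Rv ℓ i ∨ 4 * Rv ℓ i ≤ Xv ℓ ord j := by
    rcases le_or_gt (ℓ j).x (ℓ i).r with h | h
    · exact Or.inl (R_big ℓ ord h)
    · exact Or.inr (R_small ℓ ord h)
  have hE2 : 4 * Yv ℓ ord i ≤ Tv ℓ j ∨ 4 * Tv ℓ j ≤ Yv ℓ ord i := by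
    rcases le_or_gt (ℓ i).y (ℓ j).t with h | h
    · exact Or.inl (T_big ℓ ord h)
    · exact Or.inr (T_small ℓ ord h)
  have hcore := cross_core (Xv ℓ ord i) (Yv ℓ ord i) (Rv ℓ i) (Tv ℓ i)
    (Xv ℓ ord j) (Yv ℓ ord j) (Rv ℓ j) (Tv ℓ j)
    (Xv_ge_one ℓ ord i) (Xv_ge_one ℓ ord j) (Yv_ge_one ℓ ord i) (Yv_ge_one ℓ ord j)
    (Xv_scale ℓ ord hx) (Yv_scale ℓ ord hy)
    (R_self ℓ ord i) (R_self ℓ ord j) (T_self ℓ ord i) (T_self ℓ ord j) hE1 hE2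
  rw [R_iff ℓ ord, T_iff ℓ ord]
  rw [← hcore]
  unfold βv τv fl
  rfl

lemma sg_disj {i j : ι} (hx : ordX ℓ ord i j) (hy : ordY ℓ ord i j) :
    ¬ (sg ℓ ord i ∩ sg ℓ ord j).Nonempty := by
  rw [sg_inter_iff]
  rintro ⟨v, ⟨hb1, ht1⟩, ⟨hb2, ht2⟩, heq⟩
  have h0 : 0 < v := lt_of_lt_of_le (βv_pos ℓ ord i) hb1
  have h1 : v < 1 := lt_of_le_of_lt ht1 (τv_lt_one ℓ ord i)
  have hXd : Xv ℓ ord i < Xv ℓ ord j := by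
    have := Xv_scale ℓ ord hx; have := Xv_ge_one ℓ ord i; linarith
  have hYd : Yv ℓ ord i < Yv ℓ ord j := by
    have := Yv_scale ℓ ord hy; have := Yv_ge_one ℓ ord i; linarith
  unfold fl at heq
  nlinarith [mul_pos (show (0:ℝ) < 1 - v by linarith)
      (show (0:ℝ) < Yv ℓ ord j - Yv ℓ ord i by linarith),
    mul_pos h0 (show (0:ℝ) < Xv ℓ ord j - Xv ℓ ord i by linarith)]

lemma sg_iff_Cr (hord : Function.Injective ord) {i j : ι} (hij : i ≠ j) :
    (sg ℓ ord i ∩ sg ℓ ord j).Nonempty ↔ Cr ℓ ord i j := by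
  rcases ordX_total ℓ ord hord hij with hx | hx
  · rcases ordY_total ℓ ord hord hij with hy | hy
    · have hdisj := sg_disj ℓ ord hx hy
      have hCr : ¬ Cr ℓ ord i j := by
        unfold Cr
        rintro (⟨_, hy', _⟩ | ⟨hx', _⟩)
        · exact ordY_asymm ℓ ord hy hy'
        · exact ordX_asymm ℓ ord hx hx'
      exact iff_of_false hdisj hCr
    · rw [sg_cross_orient ℓ ord hx hy]
      unfold Cr
      constructor
      · rintro ⟨h1, h2⟩; exact Or.inl ⟨hx, hy, h1, h2⟩
      · rintro (⟨_, _, h1, h2⟩ | ⟨hx', _⟩)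
        · exact ⟨h1, h2⟩
        · exact absurd hx' (ordX_asymm ℓ ord hx)
  · rcases ordY_total ℓ ord hord hij with hy | hy
    · rw [Set.inter_comm, sg_cross_orient ℓ ord hx hy]
      unfold Cr
      constructor
      · rintro ⟨h1, h2⟩; exact Or.inr ⟨hx, hy, h1, h2⟩
      · rintro (⟨hx', _⟩ | ⟨_, _, h1, h2⟩)
        · exact absurd hx' (ordX_asymm ℓ ord hx)
        · exact ⟨h1, h2⟩
    · rw [Set.inter_comm]
      have hdisj := sg_disj ℓ ord hx hy
      have hCr : ¬ Cr ℓ ord i j := by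
        unfold Cr
        rintro (⟨hx', _⟩ | ⟨_, hy', _⟩)
        · exact ordX_asymm ℓ ord hx hx'
        · exact ordY_asymm ℓ ord hy hy'
      exact iff_of_false hdisj hCr

end Stmt9Aux

namespace Stmt9Aux

set_option linter.unusedSectionVars false

/-- Explicit intersection condition for two L-shapes. -/
def G (a b : LS) : Prop :=
  (a.y = b.y ∧ b.x ≤ a.r ∧ a.x ≤ b.r) ∨
  (a.x = b.x ∧ b.y ≤ a.t ∧ a.y ≤ b.t) ∨
  (a.x ≤ b.x ∧ b.x ≤ a.r ∧ b.y ≤ a.y ∧ a.y ≤ b.t) ∨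
  (b.x ≤ a.x ∧ a.x ≤ b.r ∧ a.y ≤ b.y ∧ b.y ≤ a.t)

lemma G_comm (a b : LS) : G a b ↔ G b a := by unfold G; tauto

lemma mem_hSeg (a : LS) (p : ℝ × ℝ) :
    p ∈ a.hSeg ↔ (a.x ≤ p.1 ∧ p.1 ≤ a.r) ∧ p.2 = a.y := by
  simp only [LS.hSeg, Set.mem_prod, Set.mem_Icc, Set.mem_singleton_iff]

lemma mem_vSeg (a : LS) (p : ℝ × ℝ) :
    p ∈ a.vSeg ↔ p.1 = a.x ∧ (a.y ≤ p.2 ∧ p.2 ≤ a.t) := by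
  simp only [LS.vSeg, Set.mem_prod, Set.mem_Icc, Set.mem_singleton_iff]

lemma set_inter_iff (a b : LS) : (a.set ∩ b.set).Nonempty ↔ G a b := by
  constructor
  · rintro ⟨p, hpa, hpb⟩
    rw [LS.set, Set.mem_union, mem_hSeg, mem_vSeg] at hpa hpb
    unfold G
    rcases hpa with ⟨⟨h1, h2⟩, h3⟩ | ⟨h1, h2, h3⟩ <;>
      rcases hpb with ⟨⟨g1, g2⟩, g3⟩ | ⟨g1, g2, g3⟩
    · exact Or.inl ⟨by rw [← h3]; exact g3, by linarith, by linarith⟩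
    · exact Or.inr (Or.inr (Or.inl ⟨by linarith, by linarith, by linarith, by linarith⟩))
    · exact Or.inr (Or.inr (Or.inr ⟨by linarith, by linarith, by linarith, by linarith⟩))
    · exact Or.inr (Or.inl ⟨by rw [← h1]; exact g1, by linarith, by linarith⟩)
  · have haxr := a.hxr; have hayt := a.hyt; have hbxr := b.hxr; have hbyt := b.hyt
    rintro (⟨h1, h2, h3⟩ | ⟨h1, h2, h3⟩ | ⟨h1, h2, h3, h4⟩ | ⟨h1, h2, h3, h4⟩)
    · refine ⟨(max a.x b.x, a.y), ?_, ?_⟩ <;> rw [LS.set, Set.mem_union]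
      · exact Or.inl ((mem_hSeg a _).mpr ⟨⟨le_max_left _ _, max_le haxr.le h2⟩, rfl⟩)
      · exact Or.inl ((mem_hSeg b _).mpr ⟨⟨le_max_right _ _, max_le h3 hbxr.le⟩, h1⟩)
    · refine ⟨(a.x, max a.y b.y), ?_, ?_⟩ <;> rw [LS.set, Set.mem_union]
      · exact Or.inr ((mem_vSeg a _).mpr ⟨rfl, le_max_left _ _, max_le hayt.le h2⟩)
      · exact Or.inr ((mem_vSeg b _).mpr ⟨h1, le_max_right _ _, max_le h3 hbyt.le⟩)
    · refine ⟨(b.x, a.y), ?_, ?_⟩ <;> rw [LS.set, Set.mem_union]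
      · exact Or.inl ((mem_hSeg a _).mpr ⟨⟨h1, h2⟩, rfl⟩)
      · exact Or.inr ((mem_vSeg b _).mpr ⟨rfl, h3, h4⟩)
    · refine ⟨(a.x, b.y), ?_, ?_⟩ <;> rw [LS.set, Set.mem_union]
      · exact Or.inr ((mem_vSeg a _).mpr ⟨rfl, h3, h4⟩)
      · exact Or.inl ((mem_hSeg b _).mpr ⟨⟨h1, h2⟩, rfl⟩)

variable {ι : Type} [Fintype ι] (ℓ : ι → LS) (ord : ι → ℕ)

lemma Cr_char1 {i j : ι} (hx : (ℓ i).x < (ℓ j).x) :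
    Cr ℓ ord i j ↔ ((ℓ j).x ≤ (ℓ i).r ∧ (ℓ j).y ≤ (ℓ i).y ∧ (ℓ i).y ≤ (ℓ j).t) := by
  unfold Cr ordX ordY
  constructor
  · rintro (⟨_, hY, h1, h2⟩ | ⟨hX, _⟩)
    · refine ⟨h1, ?_, h2⟩
      rcases hY with h | ⟨h, _⟩
      · exact h.le
      · exact h.le
    · rcases hX with h | ⟨h, _⟩ <;> linarith
  · rintro ⟨h1, h2, h3⟩
    left
    refine ⟨Or.inl hx, ?_, h1, h3⟩
    rcases eq_or_lt_of_le h2 with h | h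
    · exact Or.inr ⟨h, Or.inl hx⟩
    · exact Or.inl h

lemma G_char1 {a b : LS} (hx : a.x < b.x) :
    G a b ↔ (b.x ≤ a.r ∧ b.y ≤ a.y ∧ a.y ≤ b.t) := by
  have haxr := a.hxr; have hayt := a.hyt; have hbxr := b.hxr; have hbyt := b.hyt
  unfold G
  constructor
  · rintro (⟨h1, h2, h3⟩ | ⟨h1, h2, h3⟩ | ⟨h1, h2, h3, h4⟩ | ⟨h1, h2, h3, h4⟩)
    · exact ⟨h2, le_of_eq h1.symm, by linarith⟩
    · linarith
    · exact ⟨h2, h3, h4⟩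
    · linarith
  · rintro ⟨h1, h2, h3⟩
    exact Or.inr (Or.inr (Or.inl ⟨hx.le, h1, h2, h3⟩))

lemma Cr_char2 {i j : ι} (hx : (ℓ i).x = (ℓ j).x) (hne : ord i ≠ ord j) :
    Cr ℓ ord i j ↔ ((ℓ j).y ≤ (ℓ i).t ∧ (ℓ i).y ≤ (ℓ j).t) := by
  have hir := (ℓ i).hxr; have hit := (ℓ i).hyt
  have hjr := (ℓ j).hxr; have hjt := (ℓ j).hyt
  unfold Cr ordX ordY
  constructor
  · rintro (⟨_, hY, _, h2⟩ | ⟨_, hY, _, h2⟩)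
    · refine ⟨?_, h2⟩
      rcases hY with h | ⟨h, _⟩ <;> linarith
    · refine ⟨h2, ?_⟩
      rcases hY with h | ⟨h, _⟩ <;> linarith
  · rintro ⟨h1, h2⟩
    rcases lt_trichotomy (ℓ i).y (ℓ j).y with hy | hy | hy
    · right
      exact ⟨Or.inr ⟨hx.symm, Or.inl hy⟩, Or.inl hy, by linarith, h1⟩
    · rcases lt_or_gt_of_ne hne with ho | ho
      · left
        exact ⟨Or.inr ⟨hx, Or.inr ⟨hy, ho⟩⟩,
          Or.inr ⟨hy.symm, Or.inr ⟨hx.symm, ho⟩⟩, by linarith, h2⟩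
      · right
        exact ⟨Or.inr ⟨hx.symm, Or.inr ⟨hy.symm, ho⟩⟩,
          Or.inr ⟨hy, Or.inr ⟨hx, ho⟩⟩, by linarith, h1⟩
    · left
      exact ⟨Or.inr ⟨hx, Or.inl hy⟩, Or.inl hy, by linarith, h2⟩

lemma G_char2 {a b : LS} (hx : a.x = b.x) :
    G a b ↔ (b.y ≤ a.t ∧ a.y ≤ b.t) := by
  have haxr := a.hxr; have hayt := a.hyt; have hbxr := b.hxr; have hbyt := b.hyt
  unfold G
  constructor
  · rintro (⟨h1, h2, h3⟩ | ⟨h1, h2, h3⟩ | ⟨h1, h2, h3, h4⟩ | ⟨h1, h2, h3, h4⟩)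
    · constructor <;> linarith
    · exact ⟨h2, h3⟩
    · constructor <;> linarith
    · constructor <;> linarith
  · rintro ⟨h1, h2⟩
    exact Or.inr (Or.inl ⟨hx, h1, h2⟩)

lemma G_iff_Cr (hord : Function.Injective ord) {i j : ι} (hij : i ≠ j) :
    G (ℓ i) (ℓ j) ↔ Cr ℓ ord i j := by
  rcases lt_trichotomy (ℓ i).x (ℓ j).x with hx | hx | hx
  · rw [G_char1 hx, Cr_char1 ℓ ord hx]
  · have hne : ord i ≠ ord j := fun h => hij (hord h)
    rw [G_char2 hx, Cr_char2 ℓ ord hx hne]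
  · rw [G_comm, Cr_comm, G_char1 hx, Cr_char1 ℓ ord hx]

end Stmt9Aux

namespace Stmt9Aux

set_option linter.unusedSectionVars false

variable {ι : Type} [Fintype ι] (ℓ : ι → LS) (ord : ι → ℕ)

open scoped Classical

lemma sg_isSegment (i : ι) : IsSegment (sg ℓ ord i) := by
  refine ⟨_, _, ?_, rfl⟩
  intro h
  have := congrArg Prod.snd h
  simp only at this
  exact absurd this (ne_of_lt (βv_lt_τv ℓ ord i))

lemma sg_injective (hord : Function.Injective ord) :
    Function.Injective (sg ℓ ord) := by
  intro i j h
  by_contra hij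
  have hb : (fl ℓ ord i (βv ℓ ord i), βv ℓ ord i) ∈ sg ℓ ord i := by
    rw [mem_sg]; exact ⟨le_refl _, (βv_lt_τv ℓ ord i).le, rfl⟩
  have ht : (fl ℓ ord i (τv ℓ ord i), τv ℓ ord i) ∈ sg ℓ ord i := by
    rw [mem_sg]; exact ⟨(βv_lt_τv ℓ ord i).le, le_refl _, rfl⟩
  rw [h, mem_sg] at hb ht
  have e1 : fl ℓ ord i (βv ℓ ord i) = fl ℓ ord j (βv ℓ ord i) := hb.2.2
  have e2 : fl ℓ ord i (τv ℓ ord i) = fl ℓ ord j (τv ℓ ord i) := ht.2.2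
  unfold fl at e1 e2
  have hbt : βv ℓ ord i ≠ τv ℓ ord i := ne_of_lt (βv_lt_τv ℓ ord i)
  have key : (τv ℓ ord i - βv ℓ ord i) *
      ((Xv ℓ ord i - Yv ℓ ord i) - (Xv ℓ ord j - Yv ℓ ord j)) = 0 := by
    linear_combination e2 - e1
  have hdiff : (Xv ℓ ord i - Yv ℓ ord i) - (Xv ℓ ord j - Yv ℓ ord j) = 0 := by
    rcases mul_eq_zero.mp key with h' | h'
    · exact absurd (by linarith : βv ℓ ord i = τv ℓ ord i) hbt
    · exact h'
  have hYeq : Yv ℓ ord i = Yv ℓ ord j := by linear_combination e1 - βv ℓ ord i * hdiff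
  have : Yv ℓ ord i ≠ Yv ℓ ord j := by
    rcases ordY_total ℓ ord hord hij with hy | hy
    · have := Yv_scale ℓ ord hy; have := Yv_ge_one ℓ ord i; intro hh; linarith
    · have := Yv_scale ℓ ord hy; have := Yv_ge_one ℓ ord j; intro hh; linarith
  exact this hYeq

end Stmt9Aux

open Stmt9Aux in
/-- Every intersection graph of L-shapes is an intersection graph of
segments: for every finite family `L` of L-shapes there are a finite family `S` of
nondegenerate closed segments and a bijection `φ : L → S` preserving intersection. -/
theorem stmt_9 (L : Finset (Set (ℝ × ℝ))) (hL : ∀ A ∈ L, IsLShape A) :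
    ∃ S : Finset (Set (ℝ × ℝ)), (∀ A ∈ S, IsSegment A) ∧
      ∃ φ : {A // A ∈ L} → {A // A ∈ S}, Function.Bijective φ ∧
        ∀ ℓ₁ ℓ₂ : {A // A ∈ L}, ℓ₁ ≠ ℓ₂ →
          (((ℓ₁ : Set (ℝ × ℝ)) ∩ (ℓ₂ : Set (ℝ × ℝ))).Nonempty ↔
            ((φ ℓ₁ : Set (ℝ × ℝ)) ∩ (φ ℓ₂ : Set (ℝ × ℝ))).Nonempty) := by
  classical
  have hchoice : ∀ i : {A // A ∈ L}, ∃ l : LS, (i : Set (ℝ × ℝ)) = l.set :=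
    fun i => hL i.1 i.2
  choose ℓf hℓf using hchoice
  set ordf : {A // A ∈ L} → ℕ := fun i => ((Fintype.equivFin {A // A ∈ L}) i : ℕ) with hordf
  have hord : Function.Injective ordf := by
    intro i j h
    exact (Fintype.equivFin {A // A ∈ L}).injective (Fin.val_injective h)
  set s : {A // A ∈ L} → Set (ℝ × ℝ) := fun i => sg ℓf ordf i with hs
  have hs_inj : Function.Injective s := sg_injective ℓf ordf hord
  refine ⟨Finset.univ.image s, ?_, ?_⟩
  · intro A hA
    rw [Finset.mem_image] at hA
    obtain ⟨i, _, rfl⟩ := hA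
    exact sg_isSegment ℓf ordf i
  · refine ⟨fun i => ⟨s i, Finset.mem_image_of_mem s (Finset.mem_univ i)⟩, ⟨?_, ?_⟩, ?_⟩
    · intro i j h
      exact hs_inj (congrArg Subtype.val h)
    · rintro ⟨A, hA⟩
      rw [Finset.mem_image] at hA
      obtain ⟨i, _, hi⟩ := hA
      exact ⟨i, Subtype.ext hi⟩
    · intro i j hij
      have h1 : ((i : Set (ℝ × ℝ)) ∩ (j : Set (ℝ × ℝ))).Nonempty ↔ Cr ℓf ordf i j := by
        rw [hℓf i, hℓf j, set_inter_iff, G_iff_Cr ℓf ordf hord hij]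
      have h2 : (s i ∩ s j).Nonempty ↔ Cr ℓf ordf i j := sg_iff_Cr ℓf ordf hord hij
      simp only []
      rw [h1, ← h2]
end

section
/- Let h be the horizontal line y = 0, let L be a finite family of L-shapes all of whose points have positive y-coordinate, and let S be a finite family of vertical segments of the form {x} × [0,b] with b > 0, such that: the horizontal segments of the L-shapes in L have pairwise distinct y-coordinates; the vertical segments of the L-shapes in L together with the segments of S have pairwise distinct x-coordinates; every L-shape in L intersects at least one segment of S; and the family L ∪ S is triangle-free. Suppose every ℓ ∈ L has empty hook, i.e., the x-coordinate of the right endpoint of ℓ equals the x-coordinate of the rightmost support of ℓ. Then for any two L-shapes ℓ₁, ℓ₂ ∈ L such that the vertical segment of ℓ₂ intersects the horizontal segment of ℓ₁, the x-coordinate of the right endpoint of ℓ₁ is strictly greater than the x-coordinate of the right endpoint of ℓ₂ (that is, no two L-shapes in L occur in configuration (b) or (c)). -/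
open Set

/-- A vertical segment `{x} × [0, b]` with `b > 0`, grounded on the line `y = 0`. -/
structure VSeg where
  x : ℝ
  b : ℝ
  hb : 0 < b

/-- The vertical segment as a subset of the plane. -/
def VSeg.set (s : VSeg) : Set (ℝ × ℝ) := ({s.x} : Set ℝ) ×ˢ Icc (0 : ℝ) s.b

/-- `m` is a member of the family `L ∪ S`. -/
def InFam (L : Finset LS) (S : Finset VSeg) (m : Set (ℝ × ℝ)) : Prop :=
  (∃ ℓ ∈ L, m = ℓ.set) ∨ (∃ s ∈ S, m = s.set)

/-- The family `L ∪ S` is triangle-free: it has no three pairwise intersecting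
distinct members. -/
def TriangleFreeFam (L : Finset LS) (S : Finset VSeg) : Prop :=
  ¬ ∃ m₁ m₂ m₃ : Set (ℝ × ℝ), InFam L S m₁ ∧ InFam L S m₂ ∧ InFam L S m₃ ∧
      m₁ ≠ m₂ ∧ m₁ ≠ m₃ ∧ m₂ ≠ m₃ ∧
      (m₁ ∩ m₂).Nonempty ∧ (m₁ ∩ m₃).Nonempty ∧ (m₂ ∩ m₃).Nonempty

/-- The `x`-coordinate of the leftmost segment of `S` intersecting `ℓ`
(the leftmost support of `ℓ`). -/
noncomputable def leftSupX (S : Finset VSeg) (ℓ : LS) : ℝ :=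
  sInf (VSeg.x '' {s : VSeg | s ∈ S ∧ (ℓ.set ∩ s.set).Nonempty})

/-- The `x`-coordinate of the rightmost segment of `S` intersecting `ℓ`
(the rightmost support of `ℓ`). -/
noncomputable def rightSupX (S : Finset VSeg) (ℓ : LS) : ℝ :=
  sSup (VSeg.x '' {s : VSeg | s ∈ S ∧ (ℓ.set ∩ s.set).Nonempty})

/-- The handle of `ℓ`: the points of `ℓ` strictly to the left of its leftmost support. -/
noncomputable def handle (S : Finset VSeg) (ℓ : LS) : Set (ℝ × ℝ) :=
  {p ∈ ℓ.set | p.1 < leftSupX S ℓ}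

/-- The hook of `ℓ`: the points of `ℓ` strictly to the right of its rightmost support. -/
noncomputable def hook (S : Finset VSeg) (ℓ : LS) : Set (ℝ × ℝ) :=
  {p ∈ ℓ.set | rightSupX S ℓ < p.1}

lemma LS.y_le_of_mem (ℓ : LS) {p : ℝ × ℝ} (hp : p ∈ ℓ.set) : ℓ.y ≤ p.2 := by
  rcases hp with h | h
  · exact le_of_eq h.2.symm
  · exact h.2.1

lemma LS.corner_mem (ℓ : LS) : (ℓ.x, ℓ.y) ∈ ℓ.set :=
  Or.inr ⟨rfl, le_refl _, le_of_lt ℓ.hyt⟩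

lemma set_ne_of_y_ne {ℓ₁ ℓ₂ : LS} (h : ℓ₁.y ≠ ℓ₂.y) : ℓ₁.set ≠ ℓ₂.set := by
  intro he
  refine h (le_antisymm ?_ ?_)
  · have := ℓ₁.y_le_of_mem (he.symm ▸ ℓ₂.corner_mem)
    simpa using this
  · have := ℓ₂.y_le_of_mem (he ▸ ℓ₁.corner_mem)
    simpa using this

lemma ls_set_ne_vseg {ℓ : LS} {s : VSeg} (hpos : ∀ p ∈ ℓ.set, 0 < p.2) :
    ℓ.set ≠ s.set := by
  intro he
  have h0 : ((s.x, (0:ℝ)) : ℝ × ℝ) ∈ s.set := ⟨rfl, le_refl _, le_of_lt s.hb⟩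
  have := hpos _ (he ▸ h0)
  simpa using this

/-- The rightmost support is attained by some segment of `S`. -/
lemma exists_right_sup (S : Finset VSeg) (ℓ : LS)
    (hsup : ∃ s ∈ S, (ℓ.set ∩ s.set).Nonempty) :
    ∃ s ∈ S, (ℓ.set ∩ s.set).Nonempty ∧ s.x = rightSupX S ℓ := by
  set T : Set VSeg := {s : VSeg | s ∈ S ∧ (ℓ.set ∩ s.set).Nonempty} with hT
  have hTfin : T.Finite := S.finite_toSet.subset fun s hs => hs.1
  have hTne : T.Nonempty := by
    obtain ⟨s, hs, hsi⟩ := hsup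
    exact ⟨s, hs, hsi⟩
  have hfin : (VSeg.x '' T).Finite := hTfin.image _
  have hne : (VSeg.x '' T).Nonempty := hTne.image _
  have := hne.csSup_mem hfin
  obtain ⟨s, hsT, hsx⟩ := this
  exact ⟨s, hsT.1, hsT.2, hsx⟩

/-- In the setting of the key lemma, if every L-shape of `L` has empty
hook (its right endpoint has the same `x`-coordinate as its rightmost support), then
whenever the vertical segment of `ℓ₂ ∈ L` intersects the horizontal segment of
`ℓ₁ ∈ L` (`ℓ₁ ≠ ℓ₂`), the right endpoint of `ℓ₁` is strictly to the right of the right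
endpoint of `ℓ₂`: no two L-shapes of `L` occur in configuration (b) or (c). -/
theorem stmt_14 (L : Finset LS) (S : Finset VSeg)
    (hpos : ∀ ℓ ∈ L, ∀ p ∈ ℓ.set, 0 < p.2)
    (hy : ∀ ℓ₁ ∈ L, ∀ ℓ₂ ∈ L, ℓ₁ ≠ ℓ₂ → ℓ₁.y ≠ ℓ₂.y)
    (hxL : ∀ ℓ₁ ∈ L, ∀ ℓ₂ ∈ L, ℓ₁ ≠ ℓ₂ → ℓ₁.x ≠ ℓ₂.x)
    (hxS : ∀ s₁ ∈ S, ∀ s₂ ∈ S, s₁ ≠ s₂ → s₁.x ≠ s₂.x)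
    (hxLS : ∀ ℓ ∈ L, ∀ s ∈ S, ℓ.x ≠ s.x)
    (hsup : ∀ ℓ ∈ L, ∃ s ∈ S, (ℓ.set ∩ s.set).Nonempty)
    (htf : TriangleFreeFam L S)
    (hhook : ∀ ℓ ∈ L, ℓ.r = rightSupX S ℓ) :
    ∀ ℓ₁ ∈ L, ∀ ℓ₂ ∈ L, ℓ₁ ≠ ℓ₂ →
      (ℓ₂.vSeg ∩ ℓ₁.hSeg).Nonempty → ℓ₂.r < ℓ₁.r := by
  intro ℓ₁ hℓ₁ ℓ₂ hℓ₂ hne hconf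
  by_contra hcon
  push_neg at hcon
  -- hcon : ℓ₁.r ≤ ℓ₂.r
  obtain ⟨q, hqv, hqh⟩ := hconf
  obtain ⟨hq1, hq2⟩ := hqv
  obtain ⟨hq1', hq2'⟩ := hqh
  -- q.1 = ℓ₂.x, ℓ₂.y ≤ q.2 ≤ ℓ₂.t, ℓ₁.x ≤ q.1 ≤ ℓ₁.r, q.2 = ℓ₁.y
  have hx21 : ℓ₂.x ≤ ℓ₁.r := by
    have := hq1'.2; rw [hq1] at this; exact this
  have hy21 : ℓ₂.y ≤ ℓ₁.y := by
    have := hq2.1; rw [hq2'] at this; exact this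
  -- rightmost support of ℓ₁
  obtain ⟨s₁, hs₁S, hs₁i, hs₁x⟩ := exists_right_sup S ℓ₁ (hsup ℓ₁ hℓ₁)
  rw [← hhook ℓ₁ hℓ₁] at hs₁x
  -- the intersection point of ℓ₁ and s₁ is (ℓ₁.r, ℓ₁.y)
  obtain ⟨p, hpℓ, hps⟩ := hs₁i
  have hp1 : p.1 = ℓ₁.r := by rw [hps.1, hs₁x]
  have hp2 : p.2 = ℓ₁.y := by
    rcases hpℓ with h | h
    · exact h.2
    · exfalso; have := h.1; rw [hp1] at this
      exact absurd this.symm (ne_of_lt ℓ₁.hxr)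
  have hyb : ℓ₁.y ≤ s₁.b := by rw [← hp2]; exact hps.2.2
  -- s₁ meets ℓ₂ at (ℓ₁.r, ℓ₂.y)
  have hy2pos : 0 < ℓ₂.y := by
    have := hpos ℓ₂ hℓ₂ _ ℓ₂.corner_mem; simpa using this
  have hmeet : ((ℓ₁.r, ℓ₂.y) : ℝ × ℝ) ∈ ℓ₂.set ∩ s₁.set := by
    constructor
    · exact Or.inl ⟨⟨hx21, hcon⟩, rfl⟩
    · exact ⟨hs₁x.symm, le_of_lt hy2pos, le_trans hy21 hyb⟩
  -- triangle
  refine htf ⟨ℓ₁.set, ℓ₂.set, s₁.set, ?_, ?_, ?_, ?_, ?_, ?_, ?_, ?_, ?_⟩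
  · exact Or.inl ⟨ℓ₁, hℓ₁, rfl⟩
  · exact Or.inl ⟨ℓ₂, hℓ₂, rfl⟩
  · exact Or.inr ⟨s₁, hs₁S, rfl⟩
  · exact set_ne_of_y_ne (hy ℓ₁ hℓ₁ ℓ₂ hℓ₂ hne)
  · exact ls_set_ne_vseg (hpos ℓ₁ hℓ₁)
  · exact ls_set_ne_vseg (hpos ℓ₂ hℓ₂)
  · exact ⟨q, Or.inl ⟨hq1', hq2'⟩, Or.inr ⟨hq1, hq2⟩⟩
  · exact ⟨p, hpℓ, hps⟩
  · exact ⟨_, hmeet⟩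
end

section
/- Let h be the horizontal line y = 0, let L be a finite family of L-shapes all of whose points have positive y-coordinate, and let S be a finite family of vertical segments of the form {x} × [0,b] with b > 0, such that: the horizontal segments of the L-shapes in L have pairwise distinct y-coordinates; the vertical segments of the L-shapes in L together with the segments of S have pairwise distinct x-coordinates; every L-shape in L intersects at least one segment of S; and the family L ∪ S is triangle-free. Assume moreover that there is no corner of an L-shape in L lying to the left of two intersecting members of L ∪ S. Let L* be the set of those ℓ ∈ L for which there exists m ∈ L ∪ S with ℓ ∩ m ≠ ∅ such that the vertical segment of ℓ lies entirely to the left of m. Then the L-shapes in L* are pairwise disjoint. -/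
open Set

/-- `p` lies below `s`: `p ∉ s` and the upward vertical ray from `p` meets `s`. -/
def PBelow (p : ℝ × ℝ) (s : Set (ℝ × ℝ)) : Prop :=
  p ∉ s ∧ ∃ q ∈ s, q.1 = p.1 ∧ p.2 ≤ q.2

/-- `p` lies to the left of `s`: `p ∉ s` and the rightward horizontal ray
from `p` meets `s`. -/
def PLeft (p : ℝ × ℝ) (s : Set (ℝ × ℝ)) : Prop :=
  p ∉ s ∧ ∃ q ∈ s, q.2 = p.2 ∧ p.1 ≤ q.1

/-- The set `r` lies to the left of `s`: every point of `r` lies to the left of `s`. -/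
def SetLeft (r s : Set (ℝ × ℝ)) : Prop := ∀ p ∈ r, PLeft p s

lemma LS.mem_elim {ℓ : LS} {p : ℝ × ℝ} (hp : p ∈ ℓ.set) :
    (p.2 = ℓ.y ∧ ℓ.x ≤ p.1 ∧ p.1 ≤ ℓ.r) ∨ (p.1 = ℓ.x ∧ ℓ.y ≤ p.2 ∧ p.2 ≤ ℓ.t) := by
  rcases hp with h | h
  · rw [LS.hSeg, Set.mem_prod, Set.mem_Icc, Set.mem_singleton_iff] at h
    exact Or.inl ⟨h.2, h.1.1, h.1.2⟩
  · rw [LS.vSeg, Set.mem_prod, Set.mem_Icc, Set.mem_singleton_iff] at h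
    exact Or.inr ⟨h.1, h.2.1, h.2.2⟩

lemma LS.mem_hSeg' {ℓ : LS} {a b : ℝ} (h1 : ℓ.x ≤ a) (h2 : a ≤ ℓ.r) :
    ((a, b) : ℝ × ℝ) ∈ ℓ.set → b ≠ ℓ.y → (a, b) ∈ ℓ.vSeg := by
  intro h hb
  rcases h with h | h
  · rw [LS.hSeg, Set.mem_prod, Set.mem_singleton_iff] at h
    exact absurd h.2 hb
  · exact h

lemma LS.mem_hSeg_set {ℓ : LS} {a : ℝ} (h1 : ℓ.x ≤ a) (h2 : a ≤ ℓ.r) :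
    ((a, ℓ.y) : ℝ × ℝ) ∈ ℓ.set := by
  left
  rw [LS.hSeg, Set.mem_prod, Set.mem_Icc, Set.mem_singleton_iff]
  exact ⟨⟨h1, h2⟩, rfl⟩

lemma LS.mem_vSeg_set {ℓ : LS} {b : ℝ} (h1 : ℓ.y ≤ b) (h2 : b ≤ ℓ.t) :
    ((ℓ.x, b) : ℝ × ℝ) ∈ ℓ.set := by
  right
  rw [LS.vSeg, Set.mem_prod, Set.mem_Icc, Set.mem_singleton_iff]
  exact ⟨rfl, h1, h2⟩

lemma mem_vSeg_of {ℓ : LS} {b : ℝ} (h1 : ℓ.y ≤ b) (h2 : b ≤ ℓ.t) :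
    ((ℓ.x, b) : ℝ × ℝ) ∈ ℓ.vSeg := by
  rw [LS.vSeg, Set.mem_prod, Set.mem_Icc, Set.mem_singleton_iff]
  exact ⟨rfl, h1, h2⟩

/-- Structure of a supporter: if `m` intersects `ℓ` and `ℓ.vSeg` lies entirely to the left
of `m`, then `m` contains a vertical piece `{x'} × [ℓ.y, ℓ.t]` with `ℓ.x < x' ≤ ℓ.r`, and
all points of `m` have abscissa at least `x'`. -/
lemma supporter_structure {L : Finset LS} {S : Finset VSeg}
    (hy : ∀ ℓ₁ ∈ L, ∀ ℓ₂ ∈ L, ℓ₁ ≠ ℓ₂ → ℓ₁.y ≠ ℓ₂.y)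
    (hxL : ∀ ℓ₁ ∈ L, ∀ ℓ₂ ∈ L, ℓ₁ ≠ ℓ₂ → ℓ₁.x ≠ ℓ₂.x)
    (hxLS : ∀ ℓ ∈ L, ∀ s ∈ S, ℓ.x ≠ s.x)
    {ℓ : LS} (hℓ : ℓ ∈ L) (hy0 : 0 < ℓ.y)
    {m : Set (ℝ × ℝ)} (hm : InFam L S m)
    (hint : (ℓ.set ∩ m).Nonempty) (hleft : SetLeft ℓ.vSeg m) :
    ∃ x' : ℝ, ℓ.x < x' ∧ x' ≤ ℓ.r ∧ (∀ c, ℓ.y ≤ c → c ≤ ℓ.t → ((x', c) : ℝ × ℝ) ∈ m) ∧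
      ∀ p ∈ m, x' ≤ p.1 := by
  rcases hm with ⟨ℓ', hℓ', rfl⟩ | ⟨s, hs, rfl⟩
  · -- the supporter is an L-shape ℓ'
    have hne : ℓ ≠ ℓ' := by
      rintro rfl
      exact (hleft _ (mem_vSeg_of le_rfl (le_of_lt ℓ.hyt))).1 ℓ.corner_mem
    -- heights [ℓ.y, ℓ.t] covered by [ℓ'.y, ℓ'.t]
    have hcov : ∀ c, ℓ.y ≤ c → c ≤ ℓ.t → ℓ'.y ≤ c ∧ c ≤ ℓ'.t := by
      intro c h1 h2
      obtain ⟨-, q, hq, hq2, -⟩ := hleft _ (mem_vSeg_of h1 h2)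
      have hq2' : q.2 = c := hq2
      rcases LS.mem_elim hq with ⟨e, -, -⟩ | ⟨-, e1, e2⟩
      · rw [hq2'] at e; rw [e]; exact ⟨le_rfl, le_of_lt ℓ'.hyt⟩
      · rw [hq2'] at e1 e2; exact ⟨e1, e2⟩
    have hy't : ℓ'.y < ℓ.y := by
      rcases lt_or_eq_of_le (hcov ℓ.y le_rfl (le_of_lt ℓ.hyt)).1 with h | h
      · exact h
      · exact absurd h.symm (hy ℓ hℓ ℓ' hℓ' hne)
    have hx' : ℓ.x < ℓ'.x := by
      obtain ⟨-, q, hq, hq2, hq1⟩ := hleft _ (mem_vSeg_of (le_of_lt ℓ.hyt) le_rfl)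
      rcases LS.mem_elim hq with ⟨e, -, -⟩ | ⟨e, -, -⟩
      · rw [hq2] at e
        exact absurd e (ne_of_gt (lt_trans hy't ℓ.hyt))
      · rw [e] at hq1
        rcases lt_or_eq_of_le hq1 with h | h
        · exact h
        · exact absurd h (hxL ℓ hℓ ℓ' hℓ' hne)
    refine ⟨ℓ'.x, hx', ?_, ?_, ?_⟩
    · -- x' ≤ ℓ.r from the intersection point
      obtain ⟨p, hp1, hp2⟩ := hint
      rcases LS.mem_elim hp1 with ⟨e, f1, f2⟩ | ⟨e, f1, f2⟩
      · rcases LS.mem_elim hp2 with ⟨g, -, -⟩ | ⟨g, -, -⟩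
        · rw [e] at g; exact absurd g (hy ℓ hℓ ℓ' hℓ' hne)
        · rw [g] at f2; exact f2
      · exfalso
        have : p ∈ ℓ.vSeg := by
          rw [LS.vSeg, Set.mem_prod, Set.mem_Icc, Set.mem_singleton_iff]
          exact ⟨e, f1, f2⟩
        exact (hleft p this).1 hp2
    · intro c h1 h2
      obtain ⟨e1, e2⟩ := hcov c h1 h2
      exact LS.mem_vSeg_set e1 e2
    · intro p hp
      rcases LS.mem_elim hp with ⟨-, e, -⟩ | ⟨e, -, -⟩
      · exact e
      · exact le_of_eq e.symm
  · -- the supporter is a grounded vertical segment s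
    have hxs : ℓ.x < s.x := by
      obtain ⟨-, q, hq, hq2, hq1⟩ := hleft _ (mem_vSeg_of (le_of_lt ℓ.hyt) le_rfl)
      rw [VSeg.set, Set.mem_prod, Set.mem_singleton_iff] at hq
      rw [hq.1] at hq1
      rcases lt_or_eq_of_le hq1 with h | h
      · exact h
      · exact absurd h (hxLS ℓ hℓ s hs)
    have hts : ℓ.t ≤ s.b := by
      obtain ⟨-, q, hq, hq2, -⟩ := hleft _ (mem_vSeg_of (le_of_lt ℓ.hyt) le_rfl)
      rw [VSeg.set, Set.mem_prod, Set.mem_Icc] at hq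
      have hq2' : q.2 = ℓ.t := hq2
      rw [← hq2']; exact hq.2.2
    refine ⟨s.x, hxs, ?_, ?_, ?_⟩
    · obtain ⟨p, hp1, hp2⟩ := hint
      rw [VSeg.set, Set.mem_prod, Set.mem_singleton_iff] at hp2
      rcases LS.mem_elim hp1 with ⟨-, -, f2⟩ | ⟨e, -, -⟩
      · rw [← hp2.1]; exact f2
      · rw [hp2.1] at e; exact absurd e.symm (ne_of_lt hxs)
    · intro c h1 h2
      rw [VSeg.set, Set.mem_prod, Set.mem_Icc, Set.mem_singleton_iff]
      exact ⟨rfl, le_of_lt (lt_of_lt_of_le hy0 h1), le_trans h2 hts⟩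
    · intro p hp
      rw [VSeg.set, Set.mem_prod, Set.mem_singleton_iff] at hp
      exact le_of_eq hp.1.symm

/-- The key crossing lemma: if `hSeg ℓ₁` crosses `vSeg ℓ₂`, then `ℓ₂` cannot have a
supporter. -/
lemma cross_false {L : Finset LS} {S : Finset VSeg}
    (hpos : ∀ ℓ ∈ L, ∀ p ∈ ℓ.set, 0 < p.2)
    (hy : ∀ ℓ₁ ∈ L, ∀ ℓ₂ ∈ L, ℓ₁ ≠ ℓ₂ → ℓ₁.y ≠ ℓ₂.y)
    (hxL : ∀ ℓ₁ ∈ L, ∀ ℓ₂ ∈ L, ℓ₁ ≠ ℓ₂ → ℓ₁.x ≠ ℓ₂.x)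
    (hxLS : ∀ ℓ ∈ L, ∀ s ∈ S, ℓ.x ≠ s.x)
    (htf : TriangleFreeFam L S)
    (h4 : ∀ ℓ ∈ L, ∀ m₁ m₂ : Set (ℝ × ℝ), InFam L S m₁ → InFam L S m₂ → m₁ ≠ m₂ →
      (m₁ ∩ m₂).Nonempty → ¬(PLeft (ℓ.x, ℓ.y) m₁ ∧ PLeft (ℓ.x, ℓ.y) m₂))
    {ℓ₁ ℓ₂ : LS} (h1 : ℓ₁ ∈ L) (h2 : ℓ₂ ∈ L) (hne : ℓ₁ ≠ ℓ₂)
    (ha : ℓ₁.x < ℓ₂.x) (hb : ℓ₂.x ≤ ℓ₁.r) (hc : ℓ₂.y < ℓ₁.y) (hd : ℓ₁.y ≤ ℓ₂.t)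
    {m₂ : Set (ℝ × ℝ)} (hm : InFam L S m₂)
    (hint : (ℓ₂.set ∩ m₂).Nonempty) (hleft : SetLeft ℓ₂.vSeg m₂) : False := by
  have hy02 : 0 < ℓ₂.y := hpos ℓ₂ h2 _ ℓ₂.corner_mem
  obtain ⟨x', hx1, hx2, hvert, hall⟩ :=
    supporter_structure hy hxL hxLS h2 hy02 hm hint hleft
  -- the point (x', ℓ₁.y) belongs to m₂
  have hqm : ((x', ℓ₁.y) : ℝ × ℝ) ∈ m₂ := hvert ℓ₁.y (le_of_lt hc) hd
  -- corner of ℓ₁ is not in ℓ₂.set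
  have hcn2 : ((ℓ₁.x, ℓ₁.y) : ℝ × ℝ) ∉ ℓ₂.set := by
    intro h
    rcases LS.mem_elim h with ⟨e, -, -⟩ | ⟨e, -, -⟩
    · exact hy ℓ₁ h1 ℓ₂ h2 hne e
    · exact hxL ℓ₁ h1 ℓ₂ h2 hne e
  -- corner of ℓ₁ is not in m₂
  have hcnm : ((ℓ₁.x, ℓ₁.y) : ℝ × ℝ) ∉ m₂ := by
    intro h
    have := hall _ h
    simp only at this
    exact absurd (lt_of_le_of_lt this (lt_of_lt_of_le ha (le_of_lt (lt_of_lt_of_le hx1 le_rfl))))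
      (lt_irrefl _)
  -- ℓ₂.set ≠ m₂
  have hne2m : ℓ₂.set ≠ m₂ := by
    intro h
    exact (hleft _ (mem_vSeg_of le_rfl (le_of_lt ℓ₂.hyt))).1 (h ▸ ℓ₂.corner_mem)
  -- crossing point of ℓ₁ and ℓ₂
  have hcross : ((ℓ₂.x, ℓ₁.y) : ℝ × ℝ) ∈ ℓ₁.set ∩ ℓ₂.set :=
    ⟨LS.mem_hSeg_set (le_of_lt ha) hb, LS.mem_vSeg_set (le_of_lt hc) hd⟩
  rcases le_or_gt x' ℓ₁.r with hcase | hcase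
  · -- triangle ℓ₁, ℓ₂, m₂
    have hq1 : ((x', ℓ₁.y) : ℝ × ℝ) ∈ ℓ₁.set :=
      LS.mem_hSeg_set (le_of_lt (lt_trans ha hx1)) hcase
    refine htf ⟨ℓ₁.set, ℓ₂.set, m₂, Or.inl ⟨ℓ₁, h1, rfl⟩, Or.inl ⟨ℓ₂, h2, rfl⟩, hm,
      ?_, ?_, hne2m, ⟨_, hcross⟩, ⟨_, hq1, hqm⟩, hint⟩
    · intro h
      exact hcn2 (h ▸ ℓ₁.corner_mem)
    · intro h
      exact hcnm (h ▸ ℓ₁.corner_mem)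
  · -- corner of ℓ₁ lies left of both ℓ₂ and m₂
    refine h4 ℓ₁ h1 ℓ₂.set m₂ (Or.inl ⟨ℓ₂, h2, rfl⟩) hm hne2m hint ⟨?_, ?_⟩
    · exact ⟨hcn2, (ℓ₂.x, ℓ₁.y), hcross.2, rfl, le_of_lt ha⟩
    · exact ⟨hcnm, (x', ℓ₁.y), hqm, rfl, le_of_lt (lt_trans ha hx1)⟩

/-- In the setting of the key lemma, assume that no corner of an L-shape
of `L` lies to the left of two intersecting members of `L ∪ S`. Then the L-shapes
`ℓ ∈ L` admitting an intersecting member `m` of `L ∪ S` with the vertical segment of `ℓ`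
entirely to the left of `m` are pairwise disjoint. -/
theorem stmt_16 (L : Finset LS) (S : Finset VSeg)
    (hpos : ∀ ℓ ∈ L, ∀ p ∈ ℓ.set, 0 < p.2)
    (hy : ∀ ℓ₁ ∈ L, ∀ ℓ₂ ∈ L, ℓ₁ ≠ ℓ₂ → ℓ₁.y ≠ ℓ₂.y)
    (hxL : ∀ ℓ₁ ∈ L, ∀ ℓ₂ ∈ L, ℓ₁ ≠ ℓ₂ → ℓ₁.x ≠ ℓ₂.x)
    (hxS : ∀ s₁ ∈ S, ∀ s₂ ∈ S, s₁ ≠ s₂ → s₁.x ≠ s₂.x)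
    (hxLS : ∀ ℓ ∈ L, ∀ s ∈ S, ℓ.x ≠ s.x)
    (hsup : ∀ ℓ ∈ L, ∃ s ∈ S, (ℓ.set ∩ s.set).Nonempty)
    (htf : TriangleFreeFam L S)
    (h4 : ∀ ℓ ∈ L, ∀ m₁ m₂ : Set (ℝ × ℝ), InFam L S m₁ → InFam L S m₂ → m₁ ≠ m₂ →
      (m₁ ∩ m₂).Nonempty → ¬(PLeft (ℓ.x, ℓ.y) m₁ ∧ PLeft (ℓ.x, ℓ.y) m₂)) :
    ∀ ℓ₁ ∈ L, ∀ ℓ₂ ∈ L,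
      (∃ m : Set (ℝ × ℝ), InFam L S m ∧ (ℓ₁.set ∩ m).Nonempty ∧ SetLeft ℓ₁.vSeg m) →
      (∃ m : Set (ℝ × ℝ), InFam L S m ∧ (ℓ₂.set ∩ m).Nonempty ∧ SetLeft ℓ₂.vSeg m) →
      ℓ₁ ≠ ℓ₂ → Disjoint ℓ₁.set ℓ₂.set := by
  intro ℓ₁ h1 ℓ₂ h2 hm1 hm2 hne
  obtain ⟨m₁, hm1f, hm1i, hm1l⟩ := hm1
  obtain ⟨m₂, hm2f, hm2i, hm2l⟩ := hm2
  rw [Set.disjoint_left]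
  intro p hp1 hp2
  rcases LS.mem_elim hp1 with ⟨e1, f1, g1⟩ | ⟨e1, f1, g1⟩ <;>
    rcases LS.mem_elim hp2 with ⟨e2, f2, g2⟩ | ⟨e2, f2, g2⟩
  · exact hy ℓ₁ h1 ℓ₂ h2 hne (e1 ▸ e2)
  · -- hSeg ℓ₁ crosses vSeg ℓ₂
    have hax : ℓ₁.x < ℓ₂.x := by
      rcases lt_or_eq_of_le (e2 ▸ f1) with h | h
      · exact h
      · exact absurd h (hxL ℓ₁ h1 ℓ₂ h2 hne)
    have hcy : ℓ₂.y < ℓ₁.y := by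
      rcases lt_or_eq_of_le (e1 ▸ f2) with h | h
      · exact h
      · exact absurd h.symm (hy ℓ₁ h1 ℓ₂ h2 hne)
    exact absurd (cross_false hpos hy hxL hxLS htf h4 h1 h2 hne hax (e2 ▸ g1) hcy
      (e1 ▸ g2) hm2f hm2i hm2l) not_false
  · -- hSeg ℓ₂ crosses vSeg ℓ₁ (symmetric)
    have hax : ℓ₂.x < ℓ₁.x := by
      rcases lt_or_eq_of_le (e1 ▸ f2) with h | h
      · exact h
      · exact absurd h (hxL ℓ₂ h2 ℓ₁ h1 hne.symm)
    have hcy : ℓ₁.y < ℓ₂.y := by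
      rcases lt_or_eq_of_le (e2 ▸ f1) with h | h
      · exact h
      · exact absurd h.symm (hy ℓ₂ h2 ℓ₁ h1 hne.symm)
    exact absurd (cross_false hpos hy hxL hxLS htf h4 h2 h1 hne.symm hax (e1 ▸ g2) hcy
      (e2 ▸ g1) hm1f hm1i hm1l) not_false
  · exact hxL ℓ₁ h1 ℓ₂ h2 hne (e1 ▸ e2.symm ▸ rfl)
end
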